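/- In any Isbell coloring of the triangular lattice, the ordered pair of colors of two adjacent vertices uniquely determines their difference vector. Precisely: let z ∈ {3, 5} ⊆ ZMod 7 and let π be a bijection of ZMod 7. If v, v' are adjacent in T and w, w' are adjacent in T, and π(ℓ_z(v)) = π(ℓ_z(w)) and π(ℓ_z(v')) = π(ℓ_z(w')), then v' − v = w' − w. -/

import Mathlib

/-- The triangular lattice graph on `ℤ × ℤ`: `(a,b)` and `(c,d)` are adjacent iff
`(c − a, d − b) ∈ {(1,0), (−1,0), (0,1), (0,−1), (1,−1), (−1,1)}`. -/
def triLattice : SimpleGraph (ℤ × ℤ) where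
  Adj u v := (v.1 - u.1, v.2 - u.2) ∈
    ({(1, 0), (-1, 0), (0, 1), (0, -1), (1, -1), (-1, 1)} : Set (ℤ × ℤ))
  symm := by
    constructor
    intro u v h
    simp only [Set.mem_insert_iff, Set.mem_singleton_iff, Prod.mk.injEq] at h ⊢
    omega
  loopless := by
    constructor
    intro u h
    simp only [Set.mem_insert_iff, Set.mem_singleton_iff, Prod.mk.injEq] at h
    omega

/-- The linear coloring `ℓ_z : ℤ × ℤ → ZMod 7`, `ℓ_z(x, y) = x + z·y`. -/
def linColoring (z : ZMod 7) (v : ℤ × ℤ) : ZMod 7 :=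
  (v.1 : ZMod 7) + z * (v.2 : ZMod 7)

/-!
`ℓ_z` is additive, so the colors of `v` and `v'` determine `ℓ_z (v' - v)`. For `z = 3` or
`z = 5` the six unit vectors of the lattice are sent to `±1, ±z, ±(z - 1)`, which are the six
distinct nonzero residues mod 7; hence `ℓ_z (v' - v)` determines `v' - v`.
-/

def triUnitVectors : Finset (ℤ × ℤ) := {(1, 0), (-1, 0), (0, 1), (0, -1), (1, -1), (-1, 1)}

theorem triLattice_adj_iff_sub_mem {u v : ℤ × ℤ} :
    triLattice.Adj u v ↔ v - u ∈ triUnitVectors := by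
  change v - u ∈ (_ : Set (ℤ × ℤ)) ↔ _
  simp [triUnitVectors]

theorem linColoring_sub (z : ZMod 7) (v w : ℤ × ℤ) :
    linColoring z (v - w) = linColoring z v - linColoring z w := by
  simp only [linColoring, Prod.fst_sub, Prod.snd_sub, Int.cast_sub]
  ring

theorem linColoring_injOn_triUnitVectors {z : ZMod 7} (hz : z ∈ ({3, 5} : Set (ZMod 7))) :
    Set.InjOn (linColoring z) triUnitVectors := by
  rcases hz with rfl | rfl <;> intro d hd e he <;> revert d e <;> decide

/-- In an Isbell coloring `π ∘ ℓ_z` of the triangular lattice, the ordered pair of colors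
of two adjacent vertices uniquely determines their difference vector. -/
theorem isbell_determines_direction (z : ZMod 7) (hz : z ∈ ({3, 5} : Set (ZMod 7)))
    (π : Equiv.Perm (ZMod 7)) (v v' w w' : ℤ × ℤ)
    (hv : triLattice.Adj v v') (hw : triLattice.Adj w w')
    (h1 : π (linColoring z v) = π (linColoring z w))
    (h2 : π (linColoring z v') = π (linColoring z w')) :
    v' - v = w' - w := by
  have hcolor : linColoring z (v' - v) = linColoring z (w' - w) := by
    rw [linColoring_sub, linColoring_sub, π.injective h1, π.injective h2]
  exact linColoring_injOn_triUnitVectors hz (triLattice_adj_iff_sub_mem.mp hv)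
    (triLattice_adj_iff_sub_mem.mp hw) hcolor
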